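/- Let n ≥ 3 and let R be the set of reversals r_{i,j} ∈ Sₙ for 1 ≤ i < j ≤ n. In the reversal graph Rₙ = Cay(Sₙ, R), the number of permutations at distance exactly 1 from the identity equals n(n−1)/2, and the number of permutations at distance exactly 2 from the identity equals (n⁴ − 2n³ − n² − 16n + 42)/6. -/

import Mathlib

/-- The Cayley graph of a group `G` with respect to a set `S` of generators.
When `S` is closed under inverses and does not contain the identity, `g` and `h`
are adjacent if and only if `g⁻¹ * h ∈ S`. -/
def cayleyGraph {G : Type*} [Group G] (S : Set G) : SimpleGraph G where
  Adj g h := g ≠ h ∧ (g⁻¹ * h ∈ S ∨ h⁻¹ * g ∈ S)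
  symm := by
    constructor
    rintro g h ⟨hne, hmem⟩
    exact ⟨hne.symm, hmem.symm⟩
  loopless := by
    constructor
    rintro g ⟨hne, -⟩
    exact hne rfl


/-- `σ` is a reversal: for some positions `i < j`, it maps each `k` with `i ≤ k ≤ j` to
`i + j − k` and fixes all other positions. -/
def IsReversal {n : ℕ} (σ : Equiv.Perm (Fin n)) : Prop :=
  ∃ i j : Fin n, i < j ∧
    (∀ k : Fin n, i ≤ k → k ≤ j → ((σ k : ℕ) = (i : ℕ) + (j : ℕ) - (k : ℕ))) ∧
    (∀ k : Fin n, ¬(i ≤ k ∧ k ≤ j) → σ k = k)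

/-- The set of all reversals `r_{i,j}`, `i < j`, in the symmetric group on `n` letters
(here realized as permutations of `Fin n`). -/
def reversals (n : ℕ) : Set (Equiv.Perm (Fin n)) :=
  {σ | IsReversal σ}

/-!
The sphere of radius one is the set of reversals, one for each pair `i < j`. The sphere of
radius two is the set of products `r_{a,b} r_{c,d}` of two distinct reversals, since such a
product is never the identity or a reversal. Up to commuting two disjoint reversals and
conjugating the inner one of two nested reversals by the outer one, each product has a
normal form `(a, b, c, d)`: the intervals `[a, b]`, `[c, d]` are disjoint, nested or
crossing. The only further collisions are `r_{i,i+1} r_{i+1,i+2} = r_{i,i+2} r_{i,i+1}`,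
`r_{i+1,i+2} r_{i,i+1} = r_{i,i+2} r_{i+1,i+2}` and `r_{i+1,i+3} r_{i,i+2} = r_{i,i+2} r_{i+1,i+3}`.
Distinct normal forms give distinct permutations: `r_{a,b} r_{c,d}` fixes everything outside
the window `[min a c, max b d]` and moves both its endpoints, so equal products have the same
window, and then a few values inside the window tell the normal forms apart. There are four
normal forms on every four positions and four on every three, less the `2 (n - 2) + (n - 3)`
collisions, so the sphere has `4 C(n,4) + 4 C(n,3) - 3n + 7` elements.
-/

open Finset Equiv Pointwise

section CayleyGraph

variable {G : Type*} [Group G] {S : Set G}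

theorem cayleyGraph_adj_iff (hS : ∀ s ∈ S, s⁻¹ ∈ S) {g h : G} :
    (cayleyGraph S).Adj g h ↔ g ≠ h ∧ g⁻¹ * h ∈ S := by
  refine ⟨fun ⟨hne, hmem⟩ => ⟨hne, hmem.elim id fun h' => ?_⟩,
    fun ⟨hne, hmem⟩ => ⟨hne, .inl hmem⟩⟩
  simpa using hS _ h'

theorem cayleyGraph_adj_one_iff (hS : ∀ s ∈ S, s⁻¹ ∈ S) (h1 : (1 : G) ∉ S) {g : G} :
    (cayleyGraph S).Adj 1 g ↔ g ∈ S := by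
  rw [cayleyGraph_adj_iff hS, inv_one, one_mul, and_iff_right_iff_imp]
  rintro hg rfl
  exact h1 hg

theorem cayleyGraph_dist_one_eq_one_iff (hS : ∀ s ∈ S, s⁻¹ ∈ S) (h1 : (1 : G) ∉ S) {g : G} :
    (cayleyGraph S).dist 1 g = 1 ↔ g ∈ S := by
  rw [SimpleGraph.dist_eq_one_iff_adj, cayleyGraph_adj_one_iff hS h1]

theorem cayleyGraph_dist_one_eq_two_iff (hS : ∀ s ∈ S, s⁻¹ ∈ S) (h1 : (1 : G) ∉ S) {g : G} :
    (cayleyGraph S).dist 1 g = 2 ↔ g ≠ 1 ∧ g ∉ S ∧ g ∈ S * S := by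
  have hdist1 := cayleyGraph_dist_one_eq_one_iff hS h1 (g := g)
  constructor
  · intro h
    obtain ⟨p, hp⟩ := SimpleGraph.exists_walk_of_dist_ne_zero (h ▸ two_ne_zero)
    refine ⟨by rintro rfl; simp at h, fun hg => by have := hdist1.2 hg; omega, ?_⟩
    rcases p with _ | ⟨had, _ | ⟨had', _ | _⟩⟩ <;>
      simp only [SimpleGraph.Walk.length_cons, SimpleGraph.Walk.length_nil] at hp <;> try omega
    exact ⟨_, (cayleyGraph_adj_one_iff hS h1).1 had, _, ((cayleyGraph_adj_iff hS).1 had').2,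
      mul_inv_cancel_left _ _⟩
  · rintro ⟨hne, hnS, hmem⟩
    obtain ⟨a, ha, b, hb, rfl⟩ := Set.mem_mul.1 hmem
    have hab : (cayleyGraph S).Adj a (a * b) :=
      (cayleyGraph_adj_iff hS).2 ⟨fun h => h1 (mul_eq_left.1 h.symm ▸ hb), by simpa using hb⟩
    obtain ⟨w, hw⟩ : ∃ w : (cayleyGraph S).Walk 1 (a * b), w.length = 2 :=
      ⟨((cayleyGraph_adj_one_iff hS h1).2 ha).toWalk.concat hab, by simp⟩
    have hle := hw ▸ SimpleGraph.dist_le w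
    have hne0 := SimpleGraph.dist_ne_zero_iff_ne_and_reachable.2 ⟨Ne.symm hne, w.reachable⟩
    have := mt hdist1.1 hnS
    omega

end CayleyGraph

section Reversal

/-- The reflection of `[i, j]`; the guard `j < n` keeps `[0, n)` invariant, so that `rev n i j`
below is the identity when `n ≤ j`. -/
def revNat (n i j x : ℕ) : ℕ := if i ≤ x ∧ x ≤ j ∧ j < n then i + j - x else x

variable {n i j x : ℕ}

theorem revNat_lt (hx : x < n) : revNat n i j x < n := by
  unfold revNat; split_ifs <;> omega

theorem revNat_revNat (n i j x : ℕ) : revNat n i j (revNat n i j x) = x := by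
  unfold revNat; split_ifs <;> omega

theorem revNat_of_mem (hi : i ≤ x) (hj : x ≤ j) (hn : j < n) : revNat n i j x = i + j - x := by
  simp [revNat, hi, hj, hn]

theorem revNat_of_notMem (h : x < i ∨ j < x) : revNat n i j x = x := by
  unfold revNat; split_ifs <;> omega

theorem revNat_of_le (i j : ℕ) (hx : n ≤ x) : revNat n i j x = x := by
  unfold revNat; split_ifs <;> omega

theorem revNat_left (hij : i ≤ j) (hj : j < n) : revNat n i j i = j := by
  simp [revNat, hij, hj]

theorem revNat_right (hij : i ≤ j) (hj : j < n) : revNat n i j j = i := by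
  simp [revNat, hij, hj]

def rev (n i j : ℕ) : Perm (Fin n) where
  toFun x := ⟨revNat n i j x, revNat_lt x.isLt⟩
  invFun x := ⟨revNat n i j x, revNat_lt x.isLt⟩
  left_inv x := Fin.ext (revNat_revNat n i j x)
  right_inv x := Fin.ext (revNat_revNat n i j x)

@[simp]
theorem rev_apply_val (n i j : ℕ) (x : Fin n) : (rev n i j x : ℕ) = revNat n i j x := rfl

theorem rev_mul_self (n i j : ℕ) : rev n i j * rev n i j = 1 :=
  Perm.ext fun x => Fin.ext (revNat_revNat n i j x)

theorem rev_inv (n i j : ℕ) : (rev n i j)⁻¹ = rev n i j :=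
  inv_eq_of_mul_eq_one_right (rev_mul_self n i j)

theorem isReversal_rev (hij : i < j) (hj : j < n) : IsReversal (rev n i j) := by
  refine ⟨⟨i, by omega⟩, ⟨j, hj⟩, hij, fun k hik hkj => ?_, fun k hk => Fin.ext ?_⟩
  · simp only [Fin.le_def] at hik hkj
    exact revNat_of_mem hik hkj hj
  · simp only [Fin.le_def] at hk
    exact revNat_of_notMem (by omega)

theorem isReversal_iff {σ : Perm (Fin n)} :
    IsReversal σ ↔ ∃ i j, i < j ∧ j < n ∧ σ = rev n i j := by
  refine ⟨fun ⟨i, j, hij, hin, hout⟩ => ⟨i, j, hij, j.isLt, Perm.ext fun k => ?_⟩, ?_⟩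
  · by_cases hk : i ≤ k ∧ k ≤ j
    · rw [Fin.ext_iff, hin k hk.1 hk.2, rev_apply_val, revNat_of_mem hk.1 hk.2 j.isLt]
    · rw [hout k hk, Fin.ext_iff, rev_apply_val, revNat_of_notMem]
      simp only [Fin.le_def] at hk
      omega
  · rintro ⟨i, j, hij, hj, rfl⟩
    exact isReversal_rev hij hj

theorem rev_eq_rev_iff {i' j' : ℕ} (hij : i < j) (hj : j < n) (hij' : i' < j') (hj' : j' < n) :
    rev n i j = rev n i' j' ↔ i = i' ∧ j = j' := by
  refine ⟨fun h => ?_, by rintro ⟨rfl, rfl⟩; rfl⟩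
  have e (x : ℕ) (hx : x < n) : revNat n i j x = revNat n i' j' x :=
    congrArg Fin.val (Perm.ext_iff.1 h ⟨x, hx⟩)
  have e1 := e i (by omega)
  have e2 := e i' (by omega)
  unfold revNat at e1 e2
  split_ifs at e1 e2 <;> omega

theorem inv_mem_reversals {σ : Perm (Fin n)} (hσ : σ ∈ reversals n) : σ⁻¹ ∈ reversals n := by
  obtain ⟨i, j, -, -, rfl⟩ := isReversal_iff.1 hσ
  rwa [rev_inv]

theorem one_notMem_reversals (n : ℕ) : (1 : Perm (Fin n)) ∉ reversals n := by
  rintro ⟨i, j, hij, hin, -⟩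
  have := hin i le_rfl hij.le
  simp only [Perm.one_apply, Fin.lt_def] at this hij
  omega

theorem dist_one_eq_one_iff_mem_reversals {π : Perm (Fin n)} :
    (cayleyGraph (reversals n)).dist 1 π = 1 ↔ π ∈ reversals n :=
  cayleyGraph_dist_one_eq_one_iff (fun _ => inv_mem_reversals) (one_notMem_reversals n)

end Reversal

section RevProd

def revPairs (n : ℕ) : Finset (ℕ × ℕ × ℕ × ℕ) :=
  (range n ×ˢ range n ×ˢ range n ×ˢ range n).filter fun p =>
    p.1 < p.2.1 ∧ p.2.2.1 < p.2.2.2 ∧ ¬(p.1 = p.2.2.1 ∧ p.2.1 = p.2.2.2)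

def revProd (n : ℕ) (p : ℕ × ℕ × ℕ × ℕ) : Perm (Fin n) :=
  rev n p.1 p.2.1 * rev n p.2.2.1 p.2.2.2

variable {n a b c d a' b' c' d' : ℕ}

theorem mem_revPairs :
    (a, b, c, d) ∈ revPairs n ↔ a < b ∧ b < n ∧ c < d ∧ d < n ∧ ¬(a = c ∧ b = d) := by
  simp only [revPairs, mem_filter, mem_product, mem_range]
  omega

theorem revProd_eq_revProd_iff :
    revProd n (a, b, c, d) = revProd n (a', b', c', d') ↔
      ∀ x, revNat n a b (revNat n c d x) = revNat n a' b' (revNat n c' d' x) := by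
  refine ⟨fun h x => ?_, fun h => Perm.ext fun x => Fin.ext (h x)⟩
  by_cases hx : x < n
  · exact congrArg Fin.val (Perm.ext_iff.1 h ⟨x, hx⟩)
  · simp only [revNat_of_le _ _ (not_lt.1 hx)]

theorem revProd_ne_one (h : (a, b, c, d) ∈ revPairs n) : revProd n (a, b, c, d) ≠ 1 := by
  rw [mem_revPairs] at h
  change rev n a b * rev n c d ≠ 1
  rw [Ne, mul_eq_one_iff_eq_inv, rev_inv, rev_eq_rev_iff] <;> omega

/-- If `r_{a,b} r_{c,d} = r_{e,f}`, then also `r_{a,b} = r_{e,f} r_{c,d}`; the values of these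
two identities at `c, d` and at `a, b` are already incompatible. -/
theorem not_isReversal_revProd (h : (a, b, c, d) ∈ revPairs n) :
    ¬IsReversal (revProd n (a, b, c, d)) := by
  rw [mem_revPairs] at h
  rw [isReversal_iff]
  rintro ⟨e, f, hef, hf, he⟩
  have hval (x : ℕ) (hx : x < n) : revNat n a b (revNat n c d x) = revNat n e f x :=
    congrArg Fin.val (Perm.ext_iff.1 he ⟨x, hx⟩)
  have hc := hval c (by omega)
  have hd := hval d (by omega)
  have ha := hval (revNat n c d a) (revNat_lt (by omega))
  have hb := hval (revNat n c d b) (revNat_lt (by omega))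
  rw [revNat_left (by omega) (by omega)] at hc
  rw [revNat_right (by omega) (by omega)] at hd
  rw [revNat_revNat, revNat_left (by omega) (by omega)] at ha
  rw [revNat_revNat, revNat_right (by omega) (by omega)] at hb
  unfold revNat at hc hd ha hb
  split_ifs at hc hd ha hb <;> omega

theorem isLeast_revProd_moved (h : (a, b, c, d) ∈ revPairs n) :
    IsLeast {x | revNat n a b (revNat n c d x) ≠ x} (min a c) := by
  rw [mem_revPairs] at h
  refine ⟨?_, fun x hx => not_lt.1 fun hlt => hx ?_⟩ <;>
    · simp only [Set.mem_ofPred_eq, revNat]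
      split_ifs <;> omega

theorem isGreatest_revProd_moved (h : (a, b, c, d) ∈ revPairs n) :
    IsGreatest {x | revNat n a b (revNat n c d x) ≠ x} (max b d) := by
  rw [mem_revPairs] at h
  refine ⟨?_, fun x hx => not_lt.1 fun hlt => hx ?_⟩ <;>
    · simp only [Set.mem_ofPred_eq, revNat]
      split_ifs <;> omega

theorem min_eq_and_max_eq_of_revProd_eq (hp : (a, b, c, d) ∈ revPairs n)
    (hq : (a', b', c', d') ∈ revPairs n) (h : revProd n (a, b, c, d) = revProd n (a', b', c', d')) :
    min a c = min a' c' ∧ max b d = max b' d' := by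
  have hfun := revProd_eq_revProd_iff.1 h
  refine ⟨(isLeast_revProd_moved hp).unique ?_, (isGreatest_revProd_moved hp).unique ?_⟩
  · simpa only [hfun] using isLeast_revProd_moved hq
  · simpa only [hfun] using isGreatest_revProd_moved hq

theorem dist_one_eq_two_iff_mem_image_revProd {π : Perm (Fin n)} :
    (cayleyGraph (reversals n)).dist 1 π = 2 ↔ π ∈ revProd n '' revPairs n := by
  rw [cayleyGraph_dist_one_eq_two_iff (fun _ => inv_mem_reversals) (one_notMem_reversals n)]
  constructor
  · rintro ⟨hne, -, hmem⟩
    obtain ⟨σ, hσ, τ, hτ, rfl⟩ := Set.mem_mul.1 hmem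
    obtain ⟨a, b, hab, hb, rfl⟩ := isReversal_iff.1 hσ
    obtain ⟨c, d, hcd, hd, rfl⟩ := isReversal_iff.1 hτ
    refine ⟨(a, b, c, d), mem_revPairs.2 ⟨hab, hb, hcd, hd, ?_⟩, rfl⟩
    rintro ⟨rfl, rfl⟩
    exact hne (rev_mul_self n a b)
  · rintro ⟨⟨a, b, c, d⟩, hp, rfl⟩
    obtain ⟨hab, hb, hcd, hd, -⟩ := mem_revPairs.1 hp
    exact ⟨revProd_ne_one hp, not_isReversal_revProd hp,
      Set.mul_mem_mul (isReversal_rev hab hb) (isReversal_rev hcd hd)⟩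

end RevProd

section NormalForm

def disjointPairs (n : ℕ) : Finset (ℕ × ℕ × ℕ × ℕ) :=
  (range n ×ˢ range n ×ˢ range n ×ˢ range n).filter fun p =>
    p.1 < p.2.1 ∧ p.2.1 < p.2.2.1 ∧ p.2.2.1 < p.2.2.2

def nestedPairs (n : ℕ) : Finset (ℕ × ℕ × ℕ × ℕ) :=
  (range n ×ˢ range n ×ˢ range n ×ˢ range n).filter fun p =>
    p.1 ≤ p.2.2.1 ∧ p.2.2.1 < p.2.2.2 ∧ p.2.2.2 ≤ p.2.1 ∧ ¬(p.1 = p.2.2.1 ∧ p.2.1 = p.2.2.2)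

/-- Excluded: `r_{a,a+1} r_{a+1,a+2} = r_{a,a+2} r_{a,a+1}`, a nested product. -/
def crossingPairsLeft (n : ℕ) : Finset (ℕ × ℕ × ℕ × ℕ) :=
  (range n ×ˢ range n ×ˢ range n ×ˢ range n).filter fun p =>
    p.1 < p.2.2.1 ∧ p.2.2.1 ≤ p.2.1 ∧ p.2.1 < p.2.2.2 ∧
      ¬(p.2.1 = p.1 + 1 ∧ p.2.2.1 = p.1 + 1 ∧ p.2.2.2 = p.1 + 2)

/-- Excluded: `r_{c+1,c+2} r_{c,c+1} = r_{c,c+2} r_{c+1,c+2}`, a nested product, and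
`r_{c+1,c+3} r_{c,c+2} = r_{c,c+2} r_{c+1,c+3}`, which lies in `crossingPairsLeft`. -/
def crossingPairsRight (n : ℕ) : Finset (ℕ × ℕ × ℕ × ℕ) :=
  (range n ×ˢ range n ×ˢ range n ×ˢ range n).filter fun p =>
    p.2.2.1 < p.1 ∧ p.1 ≤ p.2.2.2 ∧ p.2.2.2 < p.2.1 ∧
      ¬(p.1 = p.2.2.1 + 1 ∧ p.2.2.2 = p.2.2.1 + 1 ∧ p.2.1 = p.2.2.1 + 2) ∧
      ¬(p.1 = p.2.2.1 + 1 ∧ p.2.2.2 = p.2.2.1 + 2 ∧ p.2.1 = p.2.2.1 + 3)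

def normalPairs (n : ℕ) : Finset (ℕ × ℕ × ℕ × ℕ) :=
  disjointPairs n ∪ nestedPairs n ∪ crossingPairsLeft n ∪ crossingPairsRight n

variable {n a b c d : ℕ}

theorem mem_disjointPairs : (a, b, c, d) ∈ disjointPairs n ↔ a < b ∧ b < c ∧ c < d ∧ d < n := by
  simp only [disjointPairs, mem_filter, mem_product, mem_range]
  omega

theorem mem_nestedPairs :
    (a, b, c, d) ∈ nestedPairs n ↔ a ≤ c ∧ c < d ∧ d ≤ b ∧ b < n ∧ ¬(a = c ∧ b = d) := by
  simp only [nestedPairs, mem_filter, mem_product, mem_range]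
  omega

theorem mem_crossingPairsLeft : (a, b, c, d) ∈ crossingPairsLeft n ↔
    a < c ∧ c ≤ b ∧ b < d ∧ d < n ∧ ¬(b = a + 1 ∧ c = a + 1 ∧ d = a + 2) := by
  simp only [crossingPairsLeft, mem_filter, mem_product, mem_range]
  omega

theorem mem_crossingPairsRight : (a, b, c, d) ∈ crossingPairsRight n ↔
    c < a ∧ a ≤ d ∧ d < b ∧ b < n ∧ ¬(a = c + 1 ∧ d = c + 1 ∧ b = c + 2) ∧
      ¬(a = c + 1 ∧ d = c + 2 ∧ b = c + 3) := by
  simp only [crossingPairsRight, mem_filter, mem_product, mem_range]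
  omega

theorem normalPairs_subset_revPairs : normalPairs n ⊆ revPairs n := by
  rintro ⟨a, b, c, d⟩ h
  simp only [normalPairs, mem_union, mem_disjointPairs, mem_nestedPairs, mem_crossingPairsLeft,
    mem_crossingPairsRight] at h
  rw [mem_revPairs]
  omega

theorem exists_mem_normalPairs_revProd_eq (h : (a, b, c, d) ∈ revPairs n) :
    ∃ q ∈ normalPairs n, revProd n q = revProd n (a, b, c, d) := by
  rw [mem_revPairs] at h
  simp only [normalPairs, mem_union, Prod.exists, mem_disjointPairs, mem_nestedPairs,
    mem_crossingPairsLeft, mem_crossingPairsRight]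
  by_cases hdisj : b < c
  · exact ⟨a, b, c, d, by omega, rfl⟩
  by_cases hdisj' : d < a
  · exact ⟨c, d, a, b, by omega,
      revProd_eq_revProd_iff.2 fun x => by unfold revNat; split_ifs <;> omega⟩
  by_cases hnest : a ≤ c ∧ d ≤ b
  · exact ⟨a, b, c, d, by omega, rfl⟩
  by_cases hnest' : c ≤ a ∧ b ≤ d
  · exact ⟨c, d, c + d - b, c + d - a, by omega,
      revProd_eq_revProd_iff.2 fun x => by unfold revNat; split_ifs <;> omega⟩
  by_cases hcross : a < c
  · by_cases hexc : b = a + 1 ∧ c = a + 1 ∧ d = a + 2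
    · exact ⟨a, a + 2, a, a + 1, by omega,
        revProd_eq_revProd_iff.2 fun x => by unfold revNat; split_ifs <;> omega⟩
    · exact ⟨a, b, c, d, by omega, rfl⟩
  by_cases hexc : a = c + 1 ∧ d = c + 1 ∧ b = c + 2
  · exact ⟨c, c + 2, c + 1, c + 2, by omega,
      revProd_eq_revProd_iff.2 fun x => by unfold revNat; split_ifs <;> omega⟩
  by_cases hexc' : a = c + 1 ∧ d = c + 2 ∧ b = c + 3
  · exact ⟨c, c + 2, c + 1, c + 3, by omega,
      revProd_eq_revProd_iff.2 fun x => by unfold revNat; split_ifs <;> omega⟩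
  exact ⟨a, b, c, d, by omega, rfl⟩

end NormalForm

section Injectivity

variable {n a b c d a' b' c' d' : ℕ}

theorem revProd_injOn_disjointPairs : Set.InjOn (revProd n) (disjointPairs n) := by
  rintro ⟨a, b, c, d⟩ hp ⟨a', b', c', d'⟩ hq h
  rw [mem_coe, mem_disjointPairs] at hp hq
  have hw := min_eq_and_max_eq_of_revProd_eq (mem_revPairs.2 (by omega))
    (mem_revPairs.2 (by omega)) h
  replace hw : a = a' ∧ d = d' := by omega
  have e1 := revProd_eq_revProd_iff.1 h a
  have e2 := revProd_eq_revProd_iff.1 h d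
  simp (disch := omega) only [revNat_of_mem, revNat_of_notMem] at e1 e2
  simp only [Prod.mk.injEq]
  omega

theorem revProd_injOn_nestedPairs : Set.InjOn (revProd n) (nestedPairs n) := by
  rintro ⟨a, b, c, d⟩ hp ⟨a', b', c', d'⟩ hq h
  rw [mem_coe, mem_nestedPairs] at hp hq
  have hw := min_eq_and_max_eq_of_revProd_eq (mem_revPairs.2 (by omega))
    (mem_revPairs.2 (by omega)) h
  obtain ⟨rfl, rfl⟩ : a = a' ∧ b = b' := by omega
  change rev n a b * rev n c d = rev n a b * rev n c' d' at h
  obtain ⟨rfl, rfl⟩ :=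
    (rev_eq_rev_iff (by omega) (by omega) (by omega) (by omega)).1 (mul_left_cancel h)
  rfl

theorem revProd_injOn_crossingPairsLeft : Set.InjOn (revProd n) (crossingPairsLeft n) := by
  rintro ⟨a, b, c, d⟩ hp ⟨a', b', c', d'⟩ hq h
  rw [mem_coe, mem_crossingPairsLeft] at hp hq
  have hw := min_eq_and_max_eq_of_revProd_eq (mem_revPairs.2 (by omega))
    (mem_revPairs.2 (by omega)) h
  replace hw : a = a' ∧ d = d' := by omega
  have e1 := revProd_eq_revProd_iff.1 h a
  have e2 := revProd_eq_revProd_iff.1 h d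
  simp (disch := omega) only [revNat_of_mem, revNat_of_notMem] at e1 e2
  simp only [Prod.mk.injEq]
  omega

theorem revProd_injOn_crossingPairsRight : Set.InjOn (revProd n) (crossingPairsRight n) := by
  rintro ⟨a, b, c, d⟩ hp ⟨a', b', c', d'⟩ hq h
  rw [mem_coe, mem_crossingPairsRight] at hp hq
  have hw := min_eq_and_max_eq_of_revProd_eq (mem_revPairs.2 (by omega))
    (mem_revPairs.2 (by omega)) h
  replace hw : c = c' ∧ b = b' := by omega
  have e1 := revProd_eq_revProd_iff.1 h c
  have e2 := revProd_eq_revProd_iff.1 h b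
  simp (disch := omega) only [revNat_of_mem, revNat_of_notMem] at e1 e2
  simp only [Prod.mk.injEq]
  omega

theorem revProd_disjointPairs_ne_nestedPairs (hp : (a, b, c, d) ∈ disjointPairs n)
    (hq : (a', b', c', d') ∈ nestedPairs n) :
    revProd n (a, b, c, d) ≠ revProd n (a', b', c', d') := by
  rw [mem_disjointPairs] at hp
  rw [mem_nestedPairs] at hq
  intro h
  have hw := min_eq_and_max_eq_of_revProd_eq (mem_revPairs.2 (by omega))
    (mem_revPairs.2 (by omega)) h
  replace hw : a = a' ∧ d = b' := by omega
  have e1 := revProd_eq_revProd_iff.1 h a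
  have e2 := revProd_eq_revProd_iff.1 h d
  rcases hq.1.eq_or_lt with hac | hac <;>
    simp (disch := omega) only [revNat_of_mem, revNat_of_notMem] at e1 e2 <;> omega

theorem revProd_disjointPairs_ne_crossingPairsLeft (hp : (a, b, c, d) ∈ disjointPairs n)
    (hq : (a', b', c', d') ∈ crossingPairsLeft n) :
    revProd n (a, b, c, d) ≠ revProd n (a', b', c', d') := by
  rw [mem_disjointPairs] at hp
  rw [mem_crossingPairsLeft] at hq
  intro h
  have hw := min_eq_and_max_eq_of_revProd_eq (mem_revPairs.2 (by omega))
    (mem_revPairs.2 (by omega)) h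
  replace hw : a = a' ∧ d = d' := by omega
  have e1 := revProd_eq_revProd_iff.1 h a
  have e2 := revProd_eq_revProd_iff.1 h d
  simp (disch := omega) only [revNat_of_mem, revNat_of_notMem] at e1 e2
  omega

theorem revProd_disjointPairs_ne_crossingPairsRight (hp : (a, b, c, d) ∈ disjointPairs n)
    (hq : (a', b', c', d') ∈ crossingPairsRight n) :
    revProd n (a, b, c, d) ≠ revProd n (a', b', c', d') := by
  rw [mem_disjointPairs] at hp
  rw [mem_crossingPairsRight] at hq
  intro h
  have hw := min_eq_and_max_eq_of_revProd_eq (mem_revPairs.2 (by omega))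
    (mem_revPairs.2 (by omega)) h
  replace hw : a = c' ∧ d = b' := by omega
  have e1 := revProd_eq_revProd_iff.1 h a
  have e2 := revProd_eq_revProd_iff.1 h d
  simp (disch := omega) only [revNat_of_mem, revNat_of_notMem] at e1 e2
  omega

theorem revProd_nestedPairs_ne_crossingPairsLeft (hp : (a, b, c, d) ∈ nestedPairs n)
    (hq : (a', b', c', d') ∈ crossingPairsLeft n) :
    revProd n (a, b, c, d) ≠ revProd n (a', b', c', d') := by
  rw [mem_nestedPairs] at hp
  rw [mem_crossingPairsLeft] at hq
  intro h
  have hw := min_eq_and_max_eq_of_revProd_eq (mem_revPairs.2 (by omega))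
    (mem_revPairs.2 (by omega)) h
  replace hw : a = a' ∧ b = d' := by omega
  have e1 := revProd_eq_revProd_iff.1 h a
  have e2 := revProd_eq_revProd_iff.1 h b
  have e3 := revProd_eq_revProd_iff.1 h (a + 1)
  rcases hp.1.eq_or_lt with hac | hac
  · simp (disch := omega) only [revNat_of_mem, revNat_of_notMem] at e1 e2
    rcases (show c' = a + 1 ∨ a + 1 < c' by omega) with hc' | hc' <;>
      simp (disch := omega) only [revNat_of_mem, revNat_of_notMem] at e3 <;> omega
  · simp (disch := omega) only [revNat_of_mem, revNat_of_notMem] at e1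
    omega

theorem revProd_nestedPairs_ne_crossingPairsRight (hp : (a, b, c, d) ∈ nestedPairs n)
    (hq : (a', b', c', d') ∈ crossingPairsRight n) :
    revProd n (a, b, c, d) ≠ revProd n (a', b', c', d') := by
  rw [mem_nestedPairs] at hp
  rw [mem_crossingPairsRight] at hq
  intro h
  have hw := min_eq_and_max_eq_of_revProd_eq (mem_revPairs.2 (by omega))
    (mem_revPairs.2 (by omega)) h
  replace hw : a = c' ∧ b = b' := by omega
  have e1 := revProd_eq_revProd_iff.1 h a
  have e2 := revProd_eq_revProd_iff.1 h b
  have e3 := revProd_eq_revProd_iff.1 h (b - 1)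
  rcases hp.2.2.1.eq_or_lt with hdb | hdb
  · simp (disch := omega) only [revNat_of_mem, revNat_of_notMem] at e1 e2
    rcases (show a' = b - 1 ∨ a' < b - 1 by omega) with ha' | ha' <;>
      simp (disch := omega) only [revNat_of_mem, revNat_of_notMem] at e3 <;> omega
  · simp (disch := omega) only [revNat_of_mem, revNat_of_notMem] at e2
    omega

theorem revProd_crossingPairsLeft_ne_crossingPairsRight (hp : (a, b, c, d) ∈ crossingPairsLeft n)
    (hq : (a', b', c', d') ∈ crossingPairsRight n) :
    revProd n (a, b, c, d) ≠ revProd n (a', b', c', d') := by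
  rw [mem_crossingPairsLeft] at hp
  rw [mem_crossingPairsRight] at hq
  intro h
  have hw := min_eq_and_max_eq_of_revProd_eq (mem_revPairs.2 (by omega))
    (mem_revPairs.2 (by omega)) h
  replace hw : a = c' ∧ d = b' := by omega
  have e1 := revProd_eq_revProd_iff.1 h a
  have e2 := revProd_eq_revProd_iff.1 h d
  have e3 := revProd_eq_revProd_iff.1 h (a + 1)
  have e4 := revProd_eq_revProd_iff.1 h (a + 2)
  -- the values at `a + 1` and `a + 2` leave only the two excluded quadruples
  simp (disch := omega) only [revNat_of_mem, revNat_of_notMem] at e1 e2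
  rcases (show c = a + 1 ∨ a + 1 < c by omega) with hc | hc <;>
    rcases (show d' = a' ∨ a' < d' by omega) with hd' | hd' <;>
    simp (disch := omega) only [revNat_of_mem, revNat_of_notMem] at e3 <;> try omega
  rcases (show b = a + 1 ∨ a + 2 ≤ b by omega) with hb | hb <;>
    simp (disch := omega) only [revNat_of_mem, revNat_of_notMem] at e4 <;> omega

end Injectivity

section Counting

theorem card_eq_of_invOn {α β : Type*} {s : Finset α} {t : Finset β} (f : α → β) (g : β → α)
    (hf : ∀ x ∈ s, f x ∈ t ∧ g (f x) = x) (hg : ∀ y ∈ t, g y ∈ s ∧ f (g y) = y) : #s = #t :=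
  card_nbij' f g (fun x hx => (hf x hx).1) (fun y hy => (hg y hy).1) (fun x hx => (hf x hx).2)
    fun y hy => (hg y hy).2

def incPairs (n : ℕ) : Finset (ℕ × ℕ) :=
  (range n ×ˢ range n).filter fun p => p.1 < p.2

def incTriples (n : ℕ) : Finset (ℕ × ℕ × ℕ) :=
  (range n ×ˢ range n ×ˢ range n).filter fun p => p.1 < p.2.1 ∧ p.2.1 < p.2.2

variable {n a b c : ℕ}

theorem mem_incPairs : (a, b) ∈ incPairs n ↔ a < b ∧ b < n := by
  simp only [incPairs, mem_filter, mem_product, mem_range]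
  omega

theorem mem_incTriples : (a, b, c) ∈ incTriples n ↔ a < b ∧ b < c ∧ c < n := by
  simp only [incTriples, mem_filter, mem_product, mem_range]
  omega

theorem card_incPairs (n : ℕ) : #(incPairs n) = n.choose 2 := by
  induction n with
  | zero => rfl
  | succ m ih =>
    have hsplit : incPairs (m + 1) = incPairs m ∪ (range m).image fun a => (a, m) := by
      ext ⟨a, b⟩
      simp only [mem_union, mem_image, mem_range, mem_incPairs, Prod.mk.injEq, ↓existsAndEq,
        true_and]
      omega
    rw [hsplit, card_union_of_disjoint, card_image_of_injective _ fun _ _ h => (Prod.ext_iff.1 h).1,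
      card_range, ih, Nat.choose_succ_succ', Nat.choose_one_right, add_comm]
    rw [disjoint_left]
    rintro ⟨a, b⟩ h h'
    simp only [mem_image, mem_range, mem_incPairs, Prod.mk.injEq] at h h'
    omega

theorem card_incTriples (n : ℕ) : #(incTriples n) = n.choose 3 := by
  induction n with
  | zero => rfl
  | succ m ih =>
    have hsplit :
        incTriples (m + 1) = incTriples m ∪ (incPairs m).image fun p => (p.1, p.2, m) := by
      ext ⟨a, b, c⟩
      simp only [mem_union, mem_image, Prod.exists, mem_incPairs, mem_incTriples, Prod.mk.injEq,
        ↓existsAndEq, true_and]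
      omega
    rw [hsplit, card_union_of_disjoint, card_image_of_injective, ih, card_incPairs,
      Nat.choose_succ_succ' m 2, add_comm]
    · rintro ⟨a, b⟩ ⟨a', b'⟩ h
      simp only [Prod.mk.injEq] at h ⊢
      omega
    rw [disjoint_left]
    rintro ⟨a, b, c⟩ h h'
    simp only [mem_image, Prod.exists, mem_incPairs, mem_incTriples, Prod.mk.injEq] at h h'
    omega

theorem card_disjointPairs (n : ℕ) : #(disjointPairs n) = n.choose 4 := by
  induction n with
  | zero => rfl
  | succ m ih =>
    have hsplit : disjointPairs (m + 1) =
        disjointPairs m ∪ (incTriples m).image fun p => (p.1, p.2.1, p.2.2, m) := by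
      ext ⟨a, b, c, d⟩
      simp only [mem_union, mem_image, Prod.exists, mem_incTriples, mem_disjointPairs,
        Prod.mk.injEq, ↓existsAndEq, true_and]
      omega
    rw [hsplit, card_union_of_disjoint, card_image_of_injective, ih, card_incTriples,
      Nat.choose_succ_succ' m 3, add_comm]
    · rintro ⟨a, b, c⟩ ⟨a', b', c'⟩ h
      simp only [Prod.mk.injEq] at h ⊢
      omega
    rw [disjoint_left]
    rintro ⟨a, b, c, d⟩ h h'
    simp only [mem_image, Prod.exists, mem_incTriples, mem_disjointPairs, Prod.mk.injEq] at h h'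
    omega

theorem card_filter_consecutive_incTriples (n : ℕ) :
    #((incTriples n).filter fun p => p.2.1 = p.1 + 1 ∧ p.2.2 = p.1 + 2) = n - 2 := by
  rw [← card_range (n - 2)]
  exact card_eq_of_invOn (·.1) (fun a => (a, a + 1, a + 2))
    (by simp only [Prod.forall, mem_filter, mem_incTriples, mem_range, Prod.mk.injEq,
      true_and]; intros; omega)
    (by simp only [mem_filter, mem_incTriples, mem_range, and_true]; intros; omega)

theorem card_filter_consecutive_disjointPairs (n : ℕ) :
    #((disjointPairs n).filter fun p =>
      p.2.1 = p.1 + 1 ∧ p.2.2.1 = p.1 + 2 ∧ p.2.2.2 = p.1 + 3) = n - 3 := by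
  rw [← card_range (n - 3)]
  exact card_eq_of_invOn (·.1) (fun a => (a, a + 1, a + 2, a + 3))
    (by simp only [Prod.forall, mem_filter, mem_disjointPairs, mem_range, Prod.mk.injEq,
      true_and]; intros; omega)
    (by simp only [mem_filter, mem_disjointPairs, mem_range, and_true]; intros; omega)

theorem card_nestedPairs (n : ℕ) : #(nestedPairs n) = n.choose 4 + 2 * n.choose 3 := by
  have hleft : #((nestedPairs n).filter fun p => p.1 = p.2.2.1) = #(incTriples n) :=
    card_eq_of_invOn (fun p => (p.1, p.2.2.2, p.2.1)) (fun p => (p.1, p.2.2, p.1, p.2.1))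
      (by simp only [Prod.forall, mem_filter, mem_nestedPairs, mem_incTriples, Prod.mk.injEq,
        and_true, true_and]; intros; omega)
      (by simp only [Prod.forall, mem_filter, mem_nestedPairs, mem_incTriples, and_true,
        true_and]; intros; omega)
  have hright : #((nestedPairs n).filter fun p => ¬p.1 = p.2.2.1 ∧ p.2.2.2 = p.2.1) =
      #(incTriples n) :=
    card_eq_of_invOn (fun p => (p.1, p.2.2.1, p.2.1)) (fun p => (p.1, p.2.2, p.2.1, p.2.2))
      (by simp only [Prod.forall, mem_filter, mem_nestedPairs, mem_incTriples, Prod.mk.injEq,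
        true_and]; intros; omega)
      (by simp only [Prod.forall, mem_filter, mem_nestedPairs, mem_incTriples,
        and_true]; intros; omega)
  have hstrict : #((nestedPairs n).filter fun p => ¬p.1 = p.2.2.1 ∧ ¬p.2.2.2 = p.2.1) =
      #(disjointPairs n) :=
    card_eq_of_invOn (fun p => (p.1, p.2.2.1, p.2.2.2, p.2.1))
      (fun p => (p.1, p.2.2.2, p.2.1, p.2.2.1))
      (by simp only [Prod.forall, mem_filter, mem_nestedPairs, mem_disjointPairs,
        and_true]; intros; omega)
      (by simp only [Prod.forall, mem_filter, mem_nestedPairs, mem_disjointPairs,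
        and_true]; intros; omega)
  rw [← card_filter_add_card_filter_not (s := nestedPairs n) (fun p => p.1 = p.2.2.1),
    ← card_filter_add_card_filter_not (s := (nestedPairs n).filter fun p => ¬p.1 = p.2.2.1)
      (fun p => p.2.2.2 = p.2.1), filter_filter, filter_filter,
    hleft, hright, hstrict, card_incTriples, card_disjointPairs]
  ring

theorem card_crossingPairsLeft (n : ℕ) :
    #(crossingPairsLeft n) + (n - 2) = n.choose 4 + n.choose 3 := by
  have hstrict : #((crossingPairsLeft n).filter fun p => p.2.2.1 < p.2.1) = #(disjointPairs n) :=
    card_eq_of_invOn (fun p => (p.1, p.2.2.1, p.2.1, p.2.2.2))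
      (fun p => (p.1, p.2.2.1, p.2.1, p.2.2.2))
      (by simp only [Prod.forall, mem_filter, mem_crossingPairsLeft, mem_disjointPairs,
        and_true]; intros; omega)
      (by simp only [Prod.forall, mem_filter, mem_crossingPairsLeft, mem_disjointPairs,
        and_true]; intros; omega)
  have hdeg : #((crossingPairsLeft n).filter fun p => ¬p.2.2.1 < p.2.1) =
      #((incTriples n).filter fun p => ¬(p.2.1 = p.1 + 1 ∧ p.2.2 = p.1 + 2)) :=
    card_eq_of_invOn (fun p => (p.1, p.2.1, p.2.2.2)) (fun p => (p.1, p.2.1, p.2.1, p.2.2))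
      (by simp only [Prod.forall, mem_filter, mem_crossingPairsLeft, mem_incTriples, Prod.mk.injEq,
        and_true, true_and]; intros; omega)
      (by simp only [Prod.forall, mem_filter, mem_crossingPairsLeft, mem_incTriples,
        and_true]; intros; omega)
  have := card_filter_add_card_filter_not (s := crossingPairsLeft n) fun p => p.2.2.1 < p.2.1
  have := card_filter_add_card_filter_not (s := incTriples n)
    fun p => p.2.1 = p.1 + 1 ∧ p.2.2 = p.1 + 2
  have := card_filter_consecutive_incTriples n
  have := card_incTriples n
  have := card_disjointPairs n
  omega

theorem card_crossingPairsRight (n : ℕ) :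
    #(crossingPairsRight n) + (n - 2) + (n - 3) = n.choose 4 + n.choose 3 := by
  have hstrict : #((crossingPairsRight n).filter fun p => p.1 < p.2.2.2) =
      #((disjointPairs n).filter fun p =>
        ¬(p.2.1 = p.1 + 1 ∧ p.2.2.1 = p.1 + 2 ∧ p.2.2.2 = p.1 + 3)) :=
    card_eq_of_invOn (fun p => (p.2.2.1, p.1, p.2.2.2, p.2.1))
      (fun p => (p.2.1, p.2.2.2, p.1, p.2.2.1))
      (by simp only [Prod.forall, mem_filter, mem_crossingPairsRight, mem_disjointPairs,
        and_true]; intros; omega)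
      (by simp only [Prod.forall, mem_filter, mem_crossingPairsRight, mem_disjointPairs,
        and_true]; intros; omega)
  have hdeg : #((crossingPairsRight n).filter fun p => ¬p.1 < p.2.2.2) =
      #((incTriples n).filter fun p => ¬(p.2.1 = p.1 + 1 ∧ p.2.2 = p.1 + 2)) :=
    card_eq_of_invOn (fun p => (p.2.2.1, p.1, p.2.1)) (fun p => (p.2.1, p.2.2, p.1, p.2.1))
      (by simp only [Prod.forall, mem_filter, mem_crossingPairsRight, mem_incTriples, Prod.mk.injEq,
        true_and]; intros; omega)
      (by simp only [Prod.forall, mem_filter, mem_crossingPairsRight, mem_incTriples,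
        and_true]; intros; omega)
  have := card_filter_add_card_filter_not (s := crossingPairsRight n) fun p => p.1 < p.2.2.2
  have := card_filter_add_card_filter_not (s := incTriples n)
    fun p => p.2.1 = p.1 + 1 ∧ p.2.2 = p.1 + 2
  have := card_filter_add_card_filter_not (s := disjointPairs n)
    fun p => p.2.1 = p.1 + 1 ∧ p.2.2.1 = p.1 + 2 ∧ p.2.2.2 = p.1 + 3
  have := card_filter_consecutive_incTriples n
  have := card_filter_consecutive_disjointPairs n
  have := card_incTriples n
  have := card_disjointPairs n
  omega

theorem card_normalPairs (n : ℕ) :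
    #(normalPairs n) + 2 * (n - 2) + (n - 3) = 4 * n.choose 4 + 4 * n.choose 3 := by
  rw [normalPairs, card_union_of_disjoint, card_union_of_disjoint, card_union_of_disjoint]
  · have := card_disjointPairs n
    have := card_nestedPairs n
    have := card_crossingPairsLeft n
    have := card_crossingPairsRight n
    omega
  all_goals
    rw [disjoint_left]
    rintro ⟨a, b, c, d⟩ h h'
    simp only [mem_union, mem_disjointPairs, mem_nestedPairs, mem_crossingPairsLeft,
      mem_crossingPairsRight] at h h'
    omega

theorem cast_card_normalPairs (hn : 3 ≤ n) :
    (#(normalPairs n) : ℚ) =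
      ((n : ℚ) ^ 4 - 2 * (n : ℚ) ^ 3 - (n : ℚ) ^ 2 - 16 * (n : ℚ) + 42) / 6 := by
  obtain ⟨m, rfl⟩ := Nat.exists_eq_add_of_le' hn
  have hcard := congrArg (Nat.cast : ℕ → ℚ) (card_normalPairs (m + 3))
  have hchoose : ((m + 3).choose 4 : ℚ) * 24 = (m + 3) * (m + 2) * (m + 1) * m ∧
      ((m + 3).choose 3 : ℚ) * 6 = (m + 3) * (m + 2) * (m + 1) := by
    simp only [Nat.cast_choose_eq_ascPochhammer_div, ascPochhammer_succ_eval, ascPochhammer_one,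
      Polynomial.eval_X, Nat.factorial]
    push_cast
    constructor <;> ring
  rw [show m + 3 - 2 = m + 1 by omega, Nat.add_sub_cancel] at hcard
  push_cast at hcard
  rw [eq_div_iff (by norm_num)]
  push_cast
  linear_combination 6 * hcard + hchoose.1 + 4 * hchoose.2

end Counting

section Spheres

theorem revProd_injOn_normalPairs {n : ℕ} : Set.InjOn (revProd n) (normalPairs n) := by
  simp only [normalPairs, coe_union]
  refine (Set.injOn_union ?_).2 ⟨(Set.injOn_union ?_).2 ⟨(Set.injOn_union ?_).2
    ⟨revProd_injOn_disjointPairs, revProd_injOn_nestedPairs, ?_⟩, revProd_injOn_crossingPairsLeft,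
      ?_⟩, revProd_injOn_crossingPairsRight, ?_⟩
  any_goals
    rw [Set.disjoint_left]
    rintro ⟨a, b, c, d⟩ h h'
    simp only [Set.mem_union, mem_coe, mem_disjointPairs, mem_nestedPairs, mem_crossingPairsLeft,
      mem_crossingPairsRight] at h h'
    omega
  · rintro ⟨a, b, c, d⟩ hp ⟨a', b', c', d'⟩ hq
    exact revProd_disjointPairs_ne_nestedPairs hp hq
  · rintro ⟨a, b, c, d⟩ (hp | hp) ⟨a', b', c', d'⟩ hq
    · exact revProd_disjointPairs_ne_crossingPairsLeft hp hq
    · exact revProd_nestedPairs_ne_crossingPairsLeft hp hq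
  · rintro ⟨a, b, c, d⟩ ((hp | hp) | hp) ⟨a', b', c', d'⟩ hq
    · exact revProd_disjointPairs_ne_crossingPairsRight hp hq
    · exact revProd_nestedPairs_ne_crossingPairsRight hp hq
    · exact revProd_crossingPairsLeft_ne_crossingPairsRight hp hq

theorem card_setOf_dist_eq_one (n : ℕ) :
    Nat.card {π : Perm (Fin n) | (cayleyGraph (reversals n)).dist 1 π = 1} = n.choose 2 := by
  have hset : {π : Perm (Fin n) | (cayleyGraph (reversals n)).dist 1 π = 1} =
      ↑((incPairs n).image fun p => rev n p.1 p.2) := by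
    ext π
    simp only [Set.mem_ofPred_eq, dist_one_eq_one_iff_mem_reversals, coe_image, Set.mem_image,
      mem_coe, Prod.exists, mem_incPairs]
    exact isReversal_iff.trans (by simp only [and_assoc, eq_comm])
  rw [hset, Nat.card_coe_set_eq, Set.ncard_coe_finset, card_image_of_injOn, card_incPairs]
  rintro ⟨a, b⟩ hp ⟨a', b'⟩ hq h
  rw [mem_coe, mem_incPairs] at hp hq
  rw [Prod.mk.injEq]
  exact (rev_eq_rev_iff hp.1 hp.2 hq.1 hq.2).1 h

theorem card_setOf_dist_eq_two (n : ℕ) :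
    Nat.card {π : Perm (Fin n) | (cayleyGraph (reversals n)).dist 1 π = 2} = #(normalPairs n) := by
  have hset : {π : Perm (Fin n) | (cayleyGraph (reversals n)).dist 1 π = 2} =
      ↑((normalPairs n).image (revProd n)) := by
    ext π
    rw [Set.mem_ofPred_eq, dist_one_eq_two_iff_mem_image_revProd, coe_image]
    constructor
    · rintro ⟨⟨a, b, c, d⟩, hp, rfl⟩
      exact exists_mem_normalPairs_revProd_eq hp
    · rintro ⟨q, hq, rfl⟩
      exact ⟨q, normalPairs_subset_revPairs hq, rfl⟩
  rw [hset, Nat.card_coe_set_eq, Set.ncard_coe_finset,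
    card_image_of_injOn revProd_injOn_normalPairs]

end Spheres

/-- In the reversal graph `Rₙ` (`n ≥ 3`), the sphere of radius `1` around the identity
has cardinality `n(n−1)/2` and the sphere of radius `2` has cardinality
`(n⁴ − 2n³ − n² − 16n + 42)/6`. -/
theorem reversals_sphere_one_two_card (n : ℕ) (hn : 3 ≤ n) :
    Nat.card {π : Equiv.Perm (Fin n) | (cayleyGraph (reversals n)).dist 1 π = 1} =
        n * (n - 1) / 2 ∧
      (Nat.card {π : Equiv.Perm (Fin n) | (cayleyGraph (reversals n)).dist 1 π = 2} : ℚ) =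
        ((n : ℚ) ^ 4 - 2 * (n : ℚ) ^ 3 - (n : ℚ) ^ 2 - 16 * (n : ℚ) + 42) / 6 := by
  refine ⟨?_, ?_⟩
  · rw [card_setOf_dist_eq_one, Nat.choose_two_right]
  · rw [card_setOf_dist_eq_two, cast_card_normalPairs hn]
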